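/- For n ≥ 2, the dicyclic group Dic_n = ⟨F, G | G² = F^n, F^{2n} = 1, G⁻¹FG = F^{-1}⟩ is a split metacyclic group (isomorphic to a semidirect product of two cyclic groups) if and only if n is odd. -/

import Mathlib

/-- Relations for the metacyclic group `M(u,n,r,k)` with presentation
`⟨F, G | F^n = 1, G^u = F^r, G⁻¹FG = F^k⟩`. -/
def metacyclicRels (u n r : ℕ) (k : ℤ) : Set (FreeGroup (Fin 2)) :=
  { FreeGroup.of 0 ^ n,
    FreeGroup.of 1 ^ u * (FreeGroup.of 0 ^ r)⁻¹,
    (FreeGroup.of 1)⁻¹ * FreeGroup.of 0 * FreeGroup.of 1 * (FreeGroup.of 0 ^ k)⁻¹ }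

/-- The metacyclic group `M(u,n,r,k)` as a presented group. -/
def Metacyclic (u n r : ℕ) (k : ℤ) : Type := PresentedGroup (metacyclicRels u n r k)

instance (u n r : ℕ) (k : ℤ) : Group (Metacyclic u n r k) :=
  inferInstanceAs (Group (PresentedGroup _))

/-- The generator `F` of `M(u,n,r,k)`. -/
def MF (u n r : ℕ) (k : ℤ) : Metacyclic u n r k := PresentedGroup.of 0

/-- The generator `G` of `M(u,n,r,k)`. -/
def MG (u n r : ℕ) (k : ℤ) : Metacyclic u n r k := PresentedGroup.of 1

/-- A group is split metacyclic if it is isomorphic to a semidirect product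
of two (finite) cyclic groups. -/
def IsSplitMetacyclic (H : Type*) [Group H] : Prop :=
  ∃ (n' m' : ℕ) (φ : Multiplicative (ZMod m') →* MulAut (Multiplicative (ZMod n'))),
    0 < n' ∧ 0 < m' ∧
      Nonempty (H ≃* (Multiplicative (ZMod n') ⋊[φ] Multiplicative (ZMod m')))

/-- The dicyclic group `Dic_n = M(2, 2n, n, -1)`. -/
def Dicyclic (n : ℕ) : Type := Metacyclic 2 (2*n) n (-1)

instance (n : ℕ) : Group (Dicyclic n) := inferInstanceAs (Group (Metacyclic 2 (2*n) n (-1)))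

/-- The generator `F` of `Dic_n`. -/
def DF (n : ℕ) : Dicyclic n := MF 2 (2*n) n (-1)

/-- The generator `G` of `Dic_n`. -/
def DG (n : ℕ) : Dicyclic n := MG 2 (2*n) n (-1)

/-!
`Dic_n` is isomorphic to `QuaternionGroup n`, every element being `F ^ k` or `G * F ^ k`.
For odd `n` the subgroups `⟨a 2⟩` (normal, of order `n`) and `⟨xa 0⟩` (of order `4`) have coprime
orders and are therefore complements. For even `n`, suppose `Dic_n ≃ N ⋊ Z_m`. Since `a 1` is
conjugate to its inverse, every map to an abelian group kills `a n = (a 1) ^ n`, the unique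
involution. If `m` is even, `Z_m` has an involution, which survives the projection onto `Z_m`.
If `m` is odd, the elements `xa 0` and `xa 1` of order `4` lie in the abelian kernel `N`, yet they
do not commute.
-/

open QuaternionGroup SemidirectProduct Subgroup

theorem MulEquiv.isSplitMetacyclic_iff {H K : Type*} [Group H] [Group K] (e : H ≃* K) :
    IsSplitMetacyclic H ↔ IsSplitMetacyclic K := by
  constructor <;> rintro ⟨n', m', φ, hn', hm', ⟨f⟩⟩
  exacts [⟨n', m', φ, hn', hm', ⟨e.symm.trans f⟩⟩, ⟨n', m', φ, hn', hm', ⟨e.trans f⟩⟩]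

theorem IsSplitMetacyclic.of_isComplement' {G : Type*} [Group G] [Finite G] {N K : Subgroup G}
    [N.Normal] [hN : IsCyclic N] [hK : IsCyclic K] (h : N.IsComplement' K) :
    IsSplitMetacyclic G :=
  ⟨Nat.card N, Nat.card K, _, Nat.card_pos, Nat.card_pos,
    ⟨(mulEquivSubgroup h).symm.trans
      (congr' (zmodCyclicMulEquiv hN).symm (zmodCyclicMulEquiv hK).symm)⟩⟩

namespace SemidirectProduct

variable {N G : Type*} [Group G]

theorem rightHom_eq_one_of_pow_eq_one [Group N] {φ : G →* MulAut N} [Finite G] {k : ℕ}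
    (hk : (Nat.card G).Coprime k) {x : N ⋊[φ] G} (hx : x ^ k = 1) : rightHom x = 1 :=
  hk.pow_left_bijective.injective <| by
    simp only [← map_pow, hx, map_one, one_pow]

theorem commute_of_rightHom_eq_one [CommGroup N] {φ : G →* MulAut N}
    {x y : N ⋊[φ] G} (hx : rightHom x = 1) (hy : rightHom y = 1) : Commute x y := by
  obtain ⟨a, rfl⟩ : x ∈ (inl : N →* N ⋊[φ] G).range := by rwa [range_inl_eq_ker_rightHom]
  obtain ⟨b, rfl⟩ : y ∈ (inl : N →* N ⋊[φ] G).range := by rwa [range_inl_eq_ker_rightHom]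
  exact (Commute.all a b).map inl

end SemidirectProduct

namespace QuaternionGroup

variable {n : ℕ}

@[simp]
theorem inv_a (i : ZMod (2 * n)) : (a i)⁻¹ = a (-i) := rfl

@[simp]
theorem inv_xa (i : ZMod (2 * n)) : (xa i)⁻¹ = xa ((n : ZMod (2 * n)) + i) := rfl

theorem a_one_zpow (k : ℤ) : (a 1 : QuaternionGroup n) ^ k = a k := by
  cases k with
  | ofNat k => simp
  | negSucc k => rw [zpow_negSucc, a_one_pow, inv_a, Int.cast_negSucc]

theorem eq_a_of_orderOf_eq_two [NeZero n] {x : QuaternionGroup n} (hx : orderOf x = 2) :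
    x = a n := by
  rcases x with i | i
  · have hi : i.val ≠ 0 := fun h => by simp [(ZMod.val_eq_zero i).mp h] at hx
    have hii : i + i = 0 := by
      have h := pow_orderOf_eq_one (a i)
      rw [hx, sq, a_mul_a, one_def] at h
      exact a.inj h
    have hdvd : 2 * n ∣ 2 * i.val := by
      rw [← ZMod.natCast_eq_zero_iff, two_mul i.val, Nat.cast_add, ZMod.natCast_zmod_val, hii]
    have hval : i.val = n :=
      Nat.eq_of_dvd_of_lt_two_mul hi (Nat.dvd_of_mul_dvd_mul_left two_pos hdvd) i.val_lt
    rw [← ZMod.natCast_zmod_val i, hval]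
  · simp at hx

theorem map_a_eq_one_of_even {A : Type*} [CommGroup A] (f : QuaternionGroup n →* A)
    (hn : Even n) : f (a n) = 1 := by
  have hsq : f (a 1) ^ 2 = 1 := by
    have h := congrArg f (show a 1 * xa 0 = xa 0 * (a 1)⁻¹ by simp)
    rwa [map_mul, map_mul, mul_comm, mul_left_cancel_iff, map_inv, eq_inv_iff_mul_eq_one,
      ← sq] at h
  obtain ⟨k, hk⟩ := hn.two_dvd
  calc f (a n) = (f (a 1) ^ 2) ^ k := by rw [← pow_mul, ← hk, ← map_pow, a_one_pow]
    _ = 1 := by rw [hsq, one_pow]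

theorem xa_zero_mul_xa_one_ne (hn : 1 < n) :
    (xa 0 : QuaternionGroup n) * xa 1 ≠ xa 1 * xa 0 := by
  intro h
  have h2 : ((2 : ℕ) : ZMod (2 * n)) = 0 := by
    simp only [xa_mul_xa, a.injEq] at h
    push_cast
    linear_combination h
  have := Nat.le_of_dvd two_pos ((ZMod.natCast_eq_zero_iff _ _).mp h2)
  omega

instance normal_zpowers_a_two : (zpowers (a 2 : QuaternionGroup n)).Normal := by
  refine ⟨fun x hx g => ?_⟩
  obtain ⟨k, rfl⟩ := mem_zpowers_iff.mp hx
  rw [← conj_zpow]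
  apply zpow_mem
  rcases g with i | i
  · simp
  · have h2n : ((2 * n : ℕ) : ZMod (2 * n)) = 0 := ZMod.natCast_self _
    have h : (n : ZMod (2 * n)) + (n + i) - (i + 2) = -2 := by
      push_cast at h2n
      linear_combination h2n
    simpa [h] using inv_mem (mem_zpowers (a 2 : QuaternionGroup n))

theorem orderOf_a_two : orderOf (a 2 : QuaternionGroup n) = n := by
  have := orderOf_pow_of_dvd (x := (a 1 : QuaternionGroup n)) two_ne_zero
    (by rw [orderOf_a_one]; exact dvd_mul_right 2 n)
  simpa using this

theorem isSplitMetacyclic_of_odd (hn : Odd n) : IsSplitMetacyclic (QuaternionGroup n) := by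
  have : NeZero n := ⟨hn.pos.ne'⟩
  refine IsSplitMetacyclic.of_isComplement' (N := zpowers (a 2)) (K := zpowers (xa 0))
    (isComplement'_of_coprime ?_ ?_)
  · rw [Nat.card_zpowers, Nat.card_zpowers, orderOf_a_two, orderOf_xa, Nat.card_eq_fintype_card,
      card, mul_comm]
  · rw [Nat.card_zpowers, Nat.card_zpowers, orderOf_a_two, orderOf_xa]
    exact Nat.Coprime.pow_right 2 (Nat.coprime_two_right.mpr hn)

theorem not_isSplitMetacyclic_of_even [NeZero n] (hn : Even n) :
    ¬ IsSplitMetacyclic (QuaternionGroup n) := by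
  rintro ⟨n', m', φ, -, hm', ⟨e⟩⟩
  have : NeZero m' := ⟨hm'.ne'⟩
  rcases Nat.even_or_odd m' with hm2 | hm2
  · obtain ⟨q, hq⟩ := exists_prime_orderOf_dvd_card' (G := Multiplicative (ZMod m')) 2
      (by simpa using hm2.two_dvd)
    have he : e.symm (inr q) = a n := eq_a_of_orderOf_eq_two <| by
      rw [MulEquiv.orderOf_eq, orderOf_injective _ inr_injective, hq]
    have h1 : rightHom (e (a n)) = 1 := map_a_eq_one_of_even (rightHom.comp e.toMonoidHom) hn
    rw [← he, MulEquiv.apply_symm_apply, rightHom_inr] at h1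
    simp [h1] at hq
  · have hker (x : QuaternionGroup n) (hx : x ^ 4 = 1) : rightHom (e x) = 1 := by
      refine rightHom_eq_one_of_pow_eq_one (k := 4) ?_ (by rw [← map_pow, hx, map_one])
      simpa using Nat.Coprime.pow_right 2 (Nat.coprime_two_right.mpr hm2)
    have hn1 : 1 < n := by
      obtain ⟨k, hk⟩ := hn
      have := NeZero.ne n
      omega
    have hcomm := commute_of_rightHom_eq_one (hker _ (xa_pow_four 0)) (hker _ (xa_pow_four 1))
    exact xa_zero_mul_xa_one_ne hn1 (by simpa using (hcomm.map e.symm).eq)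

end QuaternionGroup

namespace Dicyclic

variable {n : ℕ}

theorem DF_pow_two_mul : DF n ^ (2 * n) = 1 :=
  PresentedGroup.one_of_mem (Set.mem_insert _ _)

theorem DG_sq : DG n ^ 2 = DF n ^ n :=
  PresentedGroup.mk_eq_mk_of_mul_inv_mem (Set.mem_insert_of_mem _ (Set.mem_insert _ _))

theorem DG_inv_mul_DF_mul_DG : (DG n)⁻¹ * DF n * DG n = (DF n)⁻¹ := by
  have h := PresentedGroup.mk_eq_mk_of_mul_inv_mem
    (Set.mem_insert_of_mem _ (Set.mem_insert_of_mem _ rfl) : _ ∈ metacyclicRels 2 (2 * n) n (-1))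
  rwa [map_mul, map_mul, map_inv, map_zpow, zpow_neg_one] at h

theorem DF_zpow_mul_DG (k : ℤ) : DF n ^ k * DG n = DG n * DF n ^ (-k) := by
  have h : (DG n)⁻¹ * DF n ^ k * DG n = DF n ^ (-k) := by
    simpa [DG_inv_mul_DF_mul_DG] using (conj_zpow (a := (DG n)⁻¹) (b := DF n) (i := k)).symm
  rw [← h]
  group

theorem DG_inv : (DG n)⁻¹ = DG n * DF n ^ (-(n : ℤ)) := by
  rw [zpow_neg, zpow_natCast, ← DG_sq, sq, mul_inv_rev, mul_inv_cancel_left]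

theorem exists_eq_DF_zpow_or_eq_DG_mul_DF_zpow (x : Dicyclic n) :
    ∃ k : ℤ, x = DF n ^ k ∨ x = DG n * DF n ^ k := by
  set P : Dicyclic n → Prop := fun x => ∃ k : ℤ, x = DF n ^ k ∨ x = DG n * DF n ^ k
  have mul_DF_zpow (x : Dicyclic n) (j : ℤ) : P x → P (x * DF n ^ j) := by
    rintro ⟨k, rfl | rfl⟩
    exacts [⟨k + j, .inl (zpow_add _ _ _).symm⟩, ⟨k + j, .inr (by rw [mul_assoc, zpow_add])⟩]
  have mul_DG (x : Dicyclic n) : P x → P (x * DG n) := by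
    rintro ⟨k, rfl | rfl⟩
    · exact ⟨-k, .inr (DF_zpow_mul_DG k)⟩
    · refine ⟨n + -k, .inl ?_⟩
      rw [mul_assoc, DF_zpow_mul_DG, ← mul_assoc, ← sq, DG_sq, ← zpow_natCast, zpow_add]
  have hx : x ∈ closure (Set.range (PresentedGroup.of (rels := metacyclicRels 2 (2 * n) n (-1)))) :=
    by rw [PresentedGroup.closure_range_of]; trivial
  induction hx using closure_induction_right with
  | one => exact ⟨0, .inl (zpow_zero _).symm⟩
  | mul_right x _ y hy ih =>
    obtain ⟨i, rfl⟩ := hy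
    fin_cases i
    · have h := mul_DF_zpow x 1 ih
      rwa [zpow_one] at h
    · exact mul_DG x ih
  | mul_inv_cancel x _ y hy ih =>
    obtain ⟨i, rfl⟩ := hy
    fin_cases i
    · have h := mul_DF_zpow x (-1) ih
      rwa [zpow_neg_one] at h
    · have h := mul_DF_zpow _ (-(n : ℤ)) (mul_DG x ih)
      rwa [mul_assoc, ← DG_inv] at h

def toQuaternionGroup : Dicyclic n →* QuaternionGroup n :=
  PresentedGroup.toGroup (f := ![a 1, xa 0]) <| by
    rintro r (rfl | rfl | rfl) <;> simp

theorem toQuaternionGroup_DF : toQuaternionGroup (DF n) = a 1 :=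
  PresentedGroup.toGroup.of _

theorem toQuaternionGroup_DG : toQuaternionGroup (DG n) = xa 0 :=
  PresentedGroup.toGroup.of _

theorem toQuaternionGroup_DF_zpow (k : ℤ) : toQuaternionGroup (DF n ^ k) = a k := by
  rw [map_zpow, toQuaternionGroup_DF, a_one_zpow]

theorem toQuaternionGroup_DG_mul_DF_zpow (k : ℤ) :
    toQuaternionGroup (DG n * DF n ^ k) = xa k := by
  rw [map_mul, toQuaternionGroup_DF_zpow, toQuaternionGroup_DG, xa_mul_a, zero_add]

theorem toQuaternionGroup_injective : Function.Injective (toQuaternionGroup (n := n)) := by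
  refine (injective_iff_map_eq_one _).mpr fun x hx => ?_
  obtain ⟨k, rfl | rfl⟩ := exists_eq_DF_zpow_or_eq_DG_mul_DF_zpow x
  · rw [toQuaternionGroup_DF_zpow, one_def, a.injEq, ZMod.intCast_zmod_eq_zero_iff_dvd] at hx
    obtain ⟨t, rfl⟩ := hx
    rw [zpow_mul, zpow_natCast, DF_pow_two_mul, one_zpow]
  · rw [toQuaternionGroup_DG_mul_DF_zpow, one_def] at hx
    cases hx

theorem toQuaternionGroup_surjective : Function.Surjective (toQuaternionGroup (n := n)) := by
  rintro (i | i)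
  · exact ⟨DF n ^ (i.cast : ℤ), by rw [toQuaternionGroup_DF_zpow, ZMod.intCast_zmod_cast]⟩
  · exact ⟨DG n * DF n ^ (i.cast : ℤ),
      by rw [toQuaternionGroup_DG_mul_DF_zpow, ZMod.intCast_zmod_cast]⟩

noncomputable def equivQuaternionGroup : Dicyclic n ≃* QuaternionGroup n :=
  .ofBijective toQuaternionGroup ⟨toQuaternionGroup_injective, toQuaternionGroup_surjective⟩

end Dicyclic

/-- `Dic_n` is split metacyclic if and only if `n` is odd. -/
theorem stmt3 (n : ℕ) (hn : 2 ≤ n) : IsSplitMetacyclic (Dicyclic n) ↔ Odd n := by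
  have : NeZero n := ⟨by omega⟩
  rw [Dicyclic.equivQuaternionGroup.isSplitMetacyclic_iff]
  refine ⟨fun h => ?_, QuaternionGroup.isSplitMetacyclic_of_odd⟩
  by_contra hodd
  exact QuaternionGroup.not_isSplitMetacyclic_of_even (Nat.not_odd_iff_even.mp hodd) h
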